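/- arXiv:1612.05612 — 6 statements merged into one kernel-verified Lean document; each statement's English description precedes it below -/
import Mathlib

section
/- Let β ∈ (1/2, 1), A_k = Σ_{i=1}^k i^{-β}, and B_{i,k} = k^{-β} Σ_{j=i}^k 1/A_j for i ≤ k. Then for any fixed N ∈ ℕ, lim_{k→∞} B_{N,k} = (1-β)/β, and sup_{i ≤ k} B_{i,k} is uniformly bounded over all i, k. -/
/-!
Concavity of `x ↦ x ^ s` for `0 < s ≤ 1` squeezes `s * i ^ (s - 1)` between consecutive
differences of `i ^ s`, so `∑_{i ≤ k} i ^ (s - 1) = k ^ s / s + O(1)`. With `s = 1 - β` this gives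
`A j ~ j ^ (1 - β) / (1 - β)`, hence `1 / A j ~ (1 - β) j ^ (β - 1)`; summing an asymptotic
equivalence whose right side is nonnegative with divergent partial sums preserves it, and with
`s = β` we get `∑_{j ≤ k} 1 / A j ~ (1 - β) / β * k ^ β`. Dropping finitely many terms does not
change the normalized limit, and `B i k ≤ B 1 k` bounds all `B i k` by a convergent sequence.
-/

open Finset Filter Asymptotics Topology

lemma rpow_add_le_rpow_add_mul {p x y : ℝ} (hp0 : 0 ≤ p) (hp1 : p ≤ 1) (hx : 0 < x)
    (hxy : 0 ≤ x + y) : (x + y) ^ p ≤ x ^ p + p * x ^ (p - 1) * y := by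
  have hyx : -1 ≤ y / x := by rw [le_div_iff₀ hx]; linarith
  calc (x + y) ^ p = x ^ p * (1 + y / x) ^ p := by
        rw [← Real.mul_rpow hx.le (by linarith), mul_add, mul_one, mul_div_cancel₀ _ hx.ne']
    _ ≤ x ^ p * (1 + p * (y / x)) := by
        gcongr; exact rpow_one_add_le_one_add_mul_self hyx hp0 hp1
    _ = x ^ p + p * x ^ (p - 1) * y := by rw [Real.rpow_sub_one hx.ne']; field_simp

lemma sum_Icc_rpow_sub_one_le {s : ℝ} (hs0 : 0 < s) (hs1 : s ≤ 1) (k : ℕ) :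
    ∑ i ∈ Icc 1 k, (i : ℝ) ^ (s - 1) ≤ (k : ℝ) ^ s / s := by
  induction k with
  | zero => simp [Real.zero_rpow hs0.ne']
  | succ k ih =>
    have hk : (k : ℝ) ^ s ≤ ((k : ℝ) + 1) ^ s - s * ((k : ℝ) + 1) ^ (s - 1) := by
      have := rpow_add_le_rpow_add_mul hs0.le hs1 (x := k + 1) (y := -1) (by positivity)
        (by simp)
      simp only [add_neg_cancel_right] at this
      linarith
    rw [sum_Icc_succ_top (by omega), Nat.cast_add_one]
    rw [le_div_iff₀ hs0] at ih ⊢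
    linarith

lemma add_one_rpow_sub_one_div_le_sum_Icc {s : ℝ} (hs0 : 0 < s) (hs1 : s ≤ 1) (k : ℕ) :
    (((k : ℝ) + 1) ^ s - 1) / s ≤ ∑ i ∈ Icc 1 k, (i : ℝ) ^ (s - 1) := by
  induction k with
  | zero => simp
  | succ k ih =>
    have hk := rpow_add_le_rpow_add_mul hs0.le hs1 (x := k + 1) (y := 1) (by positivity)
      (by positivity)
    rw [sum_Icc_succ_top (by omega), Nat.cast_add_one]
    rw [div_le_iff₀ hs0] at ih ⊢
    linarith

lemma isEquivalent_sum_Icc_rpow_sub_one {s : ℝ} (hs0 : 0 < s) (hs1 : s ≤ 1) :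
    (fun k : ℕ => ∑ i ∈ Icc 1 k, (i : ℝ) ^ (s - 1)) ~[atTop] fun k => (k : ℝ) ^ s / s := by
  have hbdd : (fun k : ℕ => ∑ i ∈ Icc 1 k, (i : ℝ) ^ (s - 1) - (k : ℝ) ^ s / s)
      =O[atTop] fun _ => (1 : ℝ) := by
    refine IsBigO.of_bound (1 / s) (Eventually.of_forall fun k => ?_)
    have hmono : (k : ℝ) ^ s / s ≤ ((k : ℝ) + 1) ^ s / s := by gcongr; linarith
    have hlow := add_one_rpow_sub_one_div_le_sum_Icc hs0 hs1 k
    have hup := sum_Icc_rpow_sub_one_le hs0 hs1 k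
    rw [sub_div] at hlow
    rw [norm_one, mul_one, Real.norm_eq_abs, abs_le]
    constructor <;> linarith
  have hlim : Tendsto (fun k : ℕ => (k : ℝ) ^ s / s) atTop atTop :=
    ((tendsto_rpow_atTop hs0).comp tendsto_natCast_atTop_atTop).atTop_div_const hs0
  exact hbdd.trans_isLittleO ((isLittleO_one_left_iff ℝ).2 (tendsto_norm_atTop_atTop.comp hlim))

theorem Asymptotics.IsEquivalent.sum_range {f g : ℕ → ℝ} (h : f ~[atTop] g) (hg : 0 ≤ g)
    (h'g : Tendsto (fun n => ∑ i ∈ range n, g i) atTop atTop) :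
    (fun n => ∑ i ∈ range n, f i) ~[atTop] fun n => ∑ i ∈ range n, g i := by
  simpa only [IsEquivalent, Pi.sub_def, sum_sub_distrib] using h.isLittleO.sum_range hg h'g

lemma sum_Icc_one_eq_sum_range {M : Type*} [AddCommMonoid M] (f : ℕ → M) (n : ℕ) :
    ∑ i ∈ Icc 1 n, f i = ∑ i ∈ range n, f (i + 1) := by
  rw [range_eq_Ico, sum_Ico_add', ← Finset.Ico_add_one_right_eq_Icc]

theorem Asymptotics.IsEquivalent.sum_Icc_one {f g : ℕ → ℝ} (h : f ~[atTop] g) (hg : 0 ≤ g)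
    (h'g : Tendsto (fun n => ∑ i ∈ Icc 1 n, g i) atTop atTop) :
    (fun n => ∑ i ∈ Icc 1 n, f i) ~[atTop] fun n => ∑ i ∈ Icc 1 n, g i := by
  simp only [sum_Icc_one_eq_sum_range] at h'g ⊢
  exact (h.comp_tendsto (tendsto_add_atTop_nat 1)).sum_range (fun i => hg (i + 1)) h'g

lemma isEquivalent_sum_Icc_inv_sum_Icc_rpow_neg {β : ℝ} (hβ0 : 0 < β) (hβ1 : β < 1) :
    (fun k : ℕ => ∑ j ∈ Icc 1 k, (∑ i ∈ Icc 1 j, (i : ℝ) ^ (-β))⁻¹) ~[atTop]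
      fun k => (1 - β) / β * (k : ℝ) ^ β := by
  have hc0 : 0 < 1 - β := by linarith
  have hA : (fun j : ℕ => ∑ i ∈ Icc 1 j, (i : ℝ) ^ (-β)) ~[atTop]
      fun j => (j : ℝ) ^ (1 - β) / (1 - β) := by
    simpa only [sub_sub_cancel_left] using isEquivalent_sum_Icc_rpow_sub_one hc0 (by linarith)
  have hAinv : (fun j : ℕ => (∑ i ∈ Icc 1 j, (i : ℝ) ^ (-β))⁻¹) ~[atTop]
      fun j => (1 - β) * (j : ℝ) ^ (β - 1) := by
    refine hA.inv.congr_right (Eventually.of_forall fun j => ?_)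
    rw [Pi.inv_apply, inv_div, div_eq_mul_inv, ← Real.rpow_neg j.cast_nonneg, neg_sub]
  have hsum : (fun k : ℕ => ∑ j ∈ Icc 1 k, (1 - β) * (j : ℝ) ^ (β - 1)) ~[atTop]
      fun k => (1 - β) / β * (k : ℝ) ^ β := by
    have := (IsEquivalent.refl (u := fun _ : ℕ => 1 - β)).mul
      (isEquivalent_sum_Icc_rpow_sub_one hβ0 hβ1.le)
    simpa only [Pi.mul_def, ← mul_sum, mul_div_assoc', div_mul_eq_mul_div] using this
  have hdiv : Tendsto (fun k : ℕ => (1 - β) / β * (k : ℝ) ^ β) atTop atTop :=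
    ((tendsto_rpow_atTop hβ0).comp tendsto_natCast_atTop_atTop).const_mul_atTop
      (div_pos hc0 hβ0)
  exact (hAinv.sum_Icc_one (fun j => by positivity) (hsum.symm.tendsto_atTop hdiv)).trans hsum

lemma tendsto_inv_mul_sum_Icc {a w : ℕ → ℝ} {L : ℝ} (hw : Tendsto w atTop atTop)
    (h : Tendsto (fun k => (w k)⁻¹ * ∑ j ∈ Icc 1 k, a j) atTop (𝓝 L)) {N : ℕ} (hN : 1 ≤ N) :
    Tendsto (fun k => (w k)⁻¹ * ∑ j ∈ Icc N k, a j) atTop (𝓝 L) := by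
  have hhead : Tendsto (fun k => (w k)⁻¹ * ∑ j ∈ Ico 1 N, a j) atTop (𝓝 0) := by
    simpa using hw.inv_tendsto_atTop.mul_const (∑ j ∈ Ico 1 N, a j)
  refine (sub_zero L ▸ h.sub hhead).congr' ?_
  filter_upwards [eventually_ge_atTop N] with k hk
  rw [← mul_sub, ← Finset.Ico_add_one_right_eq_Icc, ← Finset.Ico_add_one_right_eq_Icc,
    ← sum_Ico_consecutive _ hN (by omega), add_sub_cancel_left]

/-- With `β ∈ (1/2, 1)`, `A k = ∑_{i=1}^k i^(-β)` and `B i k = k^(-β) ∑_{j=i}^k 1/A j`,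
for any fixed `N` we have `B N k → (1-β)/β` as `k → ∞`, and the `B i k` (for `i ≤ k`)
are uniformly bounded. -/
theorem stmt_2 (β : ℝ) (hβ₁ : 1/2 < β) (hβ₂ : β < 1)
    (A : ℕ → ℝ) (hA : ∀ k : ℕ, A k = ∑ i ∈ Finset.Icc 1 k, (i : ℝ) ^ (-β))
    (B : ℕ → ℕ → ℝ)
    (hB : ∀ i k : ℕ, B i k = ((k : ℝ) ^ β)⁻¹ * ∑ j ∈ Finset.Icc i k, (A j)⁻¹) :
    (∀ N : ℕ, 1 ≤ N →
        Filter.Tendsto (fun k => B N k) Filter.atTop (nhds ((1 - β) / β))) ∧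
      ∃ M : ℝ, ∀ i k : ℕ, 1 ≤ i → i ≤ k → B i k ≤ M := by
  have hβ₀ : 0 < β := by linarith
  obtain rfl : A = fun k : ℕ => ∑ i ∈ Icc 1 k, (i : ℝ) ^ (-β) := funext hA
  have hpow : Tendsto (fun k : ℕ => (k : ℝ) ^ β) atTop atTop :=
    (tendsto_rpow_atTop hβ₀).comp tendsto_natCast_atTop_atTop
  have hB₁ : Tendsto (fun k : ℕ => ((k : ℝ) ^ β)⁻¹ *
      ∑ j ∈ Icc 1 k, (∑ i ∈ Icc 1 j, (i : ℝ) ^ (-β))⁻¹) atTop (𝓝 ((1 - β) / β)) := by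
    have hequiv := isEquivalent_sum_Icc_inv_sum_Icc_rpow_neg hβ₀ hβ₂
    refine (IsEquivalent.refl.mul hequiv).symm.tendsto_nhds (tendsto_const_nhds.congr' ?_)
    filter_upwards [hpow.eventually_gt_atTop 0] with k hk
    simp only [Pi.mul_apply]
    field_simp
  have hlim : ∀ N, 1 ≤ N → Tendsto (fun k => B N k) atTop (𝓝 ((1 - β) / β)) := fun N hN => by
    simpa only [hB] using tendsto_inv_mul_sum_Icc hpow hB₁ hN
  refine ⟨hlim, ?_⟩
  obtain ⟨M, hM⟩ := (hlim 1 le_rfl).bddAbove_range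
  refine ⟨M, fun i k hi _ => le_trans ?_ (hM ⟨k, rfl⟩)⟩
  simp only [hB]
  gcongr
end

section
/- For any k ∈ ℕ, (1/k) Σ_{j=1}^k (Σ_{i=j+1}^k 1/i)^2 = 2 − (1/k) Σ_{l=1}^k 1/l − (1/k)(Σ_{l=1}^k 1/l)^2. -/
/-! The inner sum is `H k - H j` for the harmonic numbers `H`. Passing from `k` to `k + 1` shifts
every deviation `H k - H j` by `1 / (k + 1)`, so the sums of the deviations and of their squares
obey first-order recursions, solved by `k - H k` and `2 k - H k - (H k)²`. -/

open Finset

lemma sum_Icc_inv_eq_harmonic_sub {j k : ℕ} (h : j ≤ k) :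
    ∑ i ∈ Icc (j + 1) k, (i : ℚ)⁻¹ = harmonic k - harmonic j := by
  induction k, h using Nat.le_induction with
  | base => simp
  | succ k _ ih => rw [sum_Icc_succ_top (by omega), ih, harmonic_succ]; ring

lemma harmonic_succ_sub (k j : ℕ) :
    harmonic (k + 1) - harmonic j = harmonic k - harmonic j + (k + 1 : ℚ)⁻¹ := by
  rw [harmonic_succ]; push_cast; ring

lemma sum_Icc_harmonic_sub (k : ℕ) : ∑ j ∈ Icc 1 k, (harmonic k - harmonic j) = k - harmonic k := by
  induction k with
  | zero => simp
  | succ k ih =>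
    rw [sum_Icc_succ_top (by omega), sub_self, add_zero]
    simp_rw [harmonic_succ_sub k]
    rw [sum_add_distrib, ih, sum_const, Nat.card_Icc, nsmul_eq_mul, harmonic_succ]
    push_cast
    field_simp
    ring

lemma sum_Icc_sq_harmonic_sub (k : ℕ) :
    ∑ j ∈ Icc 1 k, (harmonic k - harmonic j) ^ 2 = 2 * k - harmonic k - harmonic k ^ 2 := by
  induction k with
  | zero => simp
  | succ k ih =>
    rw [sum_Icc_succ_top (by omega), sub_self]
    simp_rw [harmonic_succ_sub k, add_sq]
    rw [sum_add_distrib, sum_add_distrib, ← sum_mul, ← mul_sum, ih, sum_Icc_harmonic_sub, sum_const,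
      Nat.card_Icc, nsmul_eq_mul, harmonic_succ]
    push_cast
    field_simp
    ring

/-- For `k ≥ 1`,
`(1/k) ∑_{j=1}^k (∑_{i=j+1}^k 1/i)² = 2 − (1/k) ∑_{l=1}^k 1/l − (1/k)(∑_{l=1}^k 1/l)²`. -/
theorem stmt_4 (k : ℕ) (hk : 1 ≤ k) :
    (1 / (k : ℝ)) * ∑ j ∈ Finset.Icc 1 k, (∑ i ∈ Finset.Icc (j + 1) k, (1 : ℝ) / i) ^ 2
      = 2 - (1 / (k : ℝ)) * ∑ l ∈ Finset.Icc 1 k, (1 : ℝ) / l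
        - (1 / (k : ℝ)) * (∑ l ∈ Finset.Icc 1 k, (1 : ℝ) / l) ^ 2 := by
  have tail (j : ℕ) (hj : j ≤ k) :
      ∑ i ∈ Icc (j + 1) k, (1 : ℝ) / i = ((harmonic k - harmonic j : ℚ) : ℝ) := by
    rw [← sum_Icc_inv_eq_harmonic_sub hj]
    push_cast
    simp only [one_div]
  have total : ∑ l ∈ Icc 1 k, (1 : ℝ) / l = harmonic k := by simpa using tail 0 k.zero_le
  have variance := congrArg (Rat.cast : ℚ → ℝ) (sum_Icc_sq_harmonic_sub k)
  push_cast at variance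
  rw [sum_congr rfl fun j hj => by rw [tail j (mem_Icc.1 hj).2], total]
  push_cast
  rw [variance]
  have hk0 : (k : ℝ) ≠ 0 := Nat.cast_ne_zero.2 (by omega)
  field_simp
end

section
/- Let A ∈ ℝ^{m×n} with columns a_1, …, a_m, and suppose x = A^T λ for some strictly positive λ ∈ ℝ^m. Then for any index i_0 ∈ [m], either (i) there exists T ⊆ [m] such that {a_{i_0}} ∪ {a_i}_{i∈T} is linearly independent and x = λ_0 a_{i_0} + Σ_{i∈T} λ_i a_i with λ_0 > 0 and λ_i > 0 for i ∈ T, or (ii) there exist T ⊆ [m] and λ_i ≥ 0 such that a_{i_0} + Σ_{i∈T} λ_i a_i = 0. -/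
/-!
Start from the representation `x = ∑ λᵢ aᵢ` and shrink its support while keeping `i₀` in it.
If the vectors in the support are dependent, take a relation `c` and flip its sign so that
`c i₀ ≤ 0`. When some `c j` is positive, moving along `-c` keeps every coefficient nonnegative
and the `i₀`-coefficient positive, and the step can be made long enough that some coefficient
becomes zero. This shrinks the support. Otherwise all of `c` is nonpositive, and dividing the
relation by `c i₀ < 0` gives alternative (ii). (If `c i₀ = 0`, use `-c` instead.)
-/

open Finset

section ConicCaratheodory

variable {𝕜 V ι : Type*} [Field 𝕜] [LinearOrder 𝕜] [IsStrictOrderedRing 𝕜]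
  [AddCommGroup V] [Module 𝕜 V]

lemma exists_max_step (s : Finset ι) {w c : ι → 𝕜} (hw : ∀ i ∈ s, 0 < w i)
    (hc : ∃ j ∈ s, 0 < c j) :
    ∃ t, 0 < t ∧ (∀ i ∈ s, t * c i ≤ w i) ∧ ∃ j ∈ s, t * c j = w j := by
  obtain ⟨j₀, hj₀s, hcj₀⟩ := hc
  have hS : (s.filter (0 < c ·)).Nonempty := ⟨j₀, mem_filter.2 ⟨hj₀s, hcj₀⟩⟩
  set t := (s.filter (0 < c ·)).inf' hS (fun i => w i / c i)
  obtain ⟨j, hjS, hjt⟩ : ∃ j ∈ s.filter (0 < c ·), t = w j / c j := exists_mem_eq_inf' hS _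
  obtain ⟨hjs, hcj⟩ := mem_filter.1 hjS
  have ht : 0 < t := hjt ▸ div_pos (hw j hjs) hcj
  refine ⟨t, ht, fun i hi => ?_, j, hjs, by rw [hjt, div_mul_cancel₀ _ hcj.ne']⟩
  rcases lt_or_ge 0 (c i) with hci | hci
  · exact (le_div_iff₀ hci).1 (inf'_le _ (mem_filter.2 ⟨hi, hci⟩))
  · exact (mul_nonpos_of_nonneg_of_nonpos ht.le hci).trans (hw i hi).le

lemma exists_ssubset_pos_sum_smul_eq_of_relation {a : ι → V} {s : Finset ι} {i₀ : ι}
    {w c : ι → 𝕜} (hi₀ : i₀ ∈ s) (hw : ∀ i ∈ s, 0 < w i) (hc : ∑ i ∈ s, c i • a i = 0)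
    (hci₀ : c i₀ ≤ 0) (hpos : ∃ j ∈ s, 0 < c j) :
    ∃ s' ⊂ s, i₀ ∈ s' ∧ ∃ w' : ι → 𝕜, (∀ i ∈ s', 0 < w' i) ∧
      ∑ i ∈ s', w' i • a i = ∑ i ∈ s, w i • a i := by
  obtain ⟨t, ht, hle, j, hjs, hj⟩ := exists_max_step s hw hpos
  set w' : ι → 𝕜 := fun i => w i - t * c i
  have hw'i₀ : w' i₀ ≠ 0 :=
    (sub_pos.2 ((mul_nonpos_of_nonneg_of_nonpos ht.le hci₀).trans_lt (hw i₀ hi₀))).ne'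
  refine ⟨s.filter (w' · ≠ 0), filter_ssubset.2 ⟨j, hjs, by simp [w', hj]⟩,
    mem_filter.2 ⟨hi₀, hw'i₀⟩, w', fun i hi => ?_, ?_⟩
  · obtain ⟨his, hne⟩ := mem_filter.1 hi
    exact (sub_nonneg.2 (hle i his)).lt_of_ne' hne
  · rw [sum_filter_of_ne fun i _ h => left_ne_zero_of_smul h]
    simp only [w', sub_smul, sum_sub_distrib, mul_smul, ← smul_sum, hc, smul_zero, sub_zero]

variable [DecidableEq ι]

lemma exists_shrinking_relation_or_nonneg_sum_eq_zero_of_nonpos {a : ι → V} {s : Finset ι}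
    {i₀ : ι} {c : ι → 𝕜} (hi₀ : i₀ ∈ s) (hc : ∑ i ∈ s, c i • a i = 0)
    (hc₀ : ∃ j ∈ s, c j ≠ 0) (hci₀ : c i₀ ≤ 0) :
    (∃ d : ι → 𝕜, ∑ i ∈ s, d i • a i = 0 ∧ d i₀ ≤ 0 ∧ ∃ j ∈ s, 0 < d j) ∨
      ∃ μ : ι → 𝕜, (∀ i ∈ s.erase i₀, 0 ≤ μ i) ∧ a i₀ + ∑ i ∈ s.erase i₀, μ i • a i = 0 := by
  by_cases hpos : ∃ j ∈ s, 0 < c j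
  · exact Or.inl ⟨c, hc, hci₀, hpos⟩
  push Not at hpos
  rcases hci₀.lt_or_eq with hneg | hzero
  · refine Or.inr ⟨fun i => c i / c i₀,
      fun i hi => div_nonneg_of_nonpos (hpos i (mem_of_mem_erase hi)) hneg.le, ?_⟩
    calc a i₀ + ∑ i ∈ s.erase i₀, (c i / c i₀) • a i = (c i₀)⁻¹ • ∑ i ∈ s, c i • a i := by
          rw [← add_sum_erase s _ hi₀, smul_add, smul_smul, inv_mul_cancel₀ hneg.ne, one_smul,
            smul_sum]
          simp only [smul_smul, div_eq_inv_mul]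
      _ = 0 := by rw [hc, smul_zero]
  · obtain ⟨j, hjs, hcj⟩ := hc₀
    refine Or.inl ⟨-c, ?_, by simp [hzero], j, hjs, ?_⟩
    · simp only [Pi.neg_apply, neg_smul, sum_neg_distrib, hc, neg_zero]
    · exact neg_pos.2 ((hpos j hjs).lt_of_ne hcj)

lemma exists_shrinking_relation_or_nonneg_sum_eq_zero {a : ι → V} {s : Finset ι} {i₀ : ι}
    {c : ι → 𝕜} (hi₀ : i₀ ∈ s) (hc : ∑ i ∈ s, c i • a i = 0) (hc₀ : ∃ j ∈ s, c j ≠ 0) :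
    (∃ d : ι → 𝕜, ∑ i ∈ s, d i • a i = 0 ∧ d i₀ ≤ 0 ∧ ∃ j ∈ s, 0 < d j) ∨
      ∃ μ : ι → 𝕜, (∀ i ∈ s.erase i₀, 0 ≤ μ i) ∧ a i₀ + ∑ i ∈ s.erase i₀, μ i • a i = 0 := by
  rcases le_total (c i₀) 0 with hci₀ | hci₀
  · exact exists_shrinking_relation_or_nonneg_sum_eq_zero_of_nonpos hi₀ hc hc₀ hci₀
  · refine exists_shrinking_relation_or_nonneg_sum_eq_zero_of_nonpos (c := -c) hi₀ ?_ ?_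
      (by simpa using hci₀)
    · simp only [Pi.neg_apply, neg_smul, sum_neg_distrib, hc, neg_zero]
    · simpa using hc₀

theorem exists_linearIndepOn_pos_sum_or_nonneg_sum_eq_zero (a : ι → V) {i₀ : ι}
    {s : Finset ι} (hi₀ : i₀ ∈ s) {w : ι → 𝕜} (hw : ∀ i ∈ s, 0 < w i) :
    (∃ s' : Finset ι, i₀ ∈ s' ∧ LinearIndepOn 𝕜 a s' ∧ ∃ w' : ι → 𝕜, (∀ i ∈ s', 0 < w' i) ∧
        ∑ i ∈ s', w' i • a i = ∑ i ∈ s, w i • a i) ∨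
      ∃ (T : Finset ι) (μ : ι → 𝕜), (∀ i ∈ T, 0 ≤ μ i) ∧ a i₀ + ∑ i ∈ T, μ i • a i = 0 := by
  induction s using Finset.strongInduction generalizing w with
  | H s ih =>
    by_cases hind : LinearIndepOn 𝕜 a s
    · exact Or.inl ⟨s, hi₀, hind, w, hw, rfl⟩
    obtain ⟨c, hc, hc₀⟩ := not_linearIndepOn_finset_iff.1 hind
    rcases exists_shrinking_relation_or_nonneg_sum_eq_zero hi₀ hc hc₀ with
      ⟨d, hd, hdi₀, hpos⟩ | ⟨μ, hμ, hμsum⟩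
    · obtain ⟨s', hss', hi₀', w', hw', hsum⟩ :=
        exists_ssubset_pos_sum_smul_eq_of_relation hi₀ hw hd hdi₀ hpos
      rcases ih s' hss' hi₀' hw' with ⟨s'', hi₀'', hind'', w'', hw'', hsum''⟩ | hzero
      · exact Or.inl ⟨s'', hi₀'', hind'', w'', hw'', hsum''.trans hsum⟩
      · exact Or.inr hzero
    · exact Or.inr ⟨_, μ, hμ, hμsum⟩

end ConicCaratheodory

/-- Carathéodory-type result for conic combinations: if `x = ∑ i, λ i • a i` with
`λ > 0`, then for any index `i₀` either (i) `x` is a positive combination of `a i₀`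
and a linearly independent subfamily (together with `a i₀`), or (ii) `a i₀` plus a
nonnegative combination of some of the `a i` vanishes. -/
theorem stmt_6 (m n : ℕ) (a : Fin m → Fin n → ℝ) (x : Fin n → ℝ)
    (lam : Fin m → ℝ) (hlam : ∀ i, 0 < lam i) (hx : x = ∑ i, lam i • a i)
    (i₀ : Fin m) :
    (∃ T : Finset (Fin m), i₀ ∉ T ∧
        LinearIndependent ℝ (fun i : ↥(insert i₀ T) => a i) ∧
        ∃ (lam₀ : ℝ) (μ : Fin m → ℝ), 0 < lam₀ ∧ (∀ i ∈ T, 0 < μ i) ∧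
          x = lam₀ • a i₀ + ∑ i ∈ T, μ i • a i) ∨
      (∃ (T : Finset (Fin m)) (μ : Fin m → ℝ), (∀ i ∈ T, 0 ≤ μ i) ∧
        a i₀ + ∑ i ∈ T, μ i • a i = 0) := by
  rcases exists_linearIndepOn_pos_sum_or_nonneg_sum_eq_zero a (mem_univ i₀)
      (fun i _ => hlam i) with ⟨s, hi₀, hind, w, hw, hsum⟩ | hzero
  · refine Or.inl ⟨s.erase i₀, notMem_erase i₀ s, ?_, w i₀, w, hw i₀ hi₀,
      fun i hi => hw i (mem_of_mem_erase hi), ?_⟩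
    · rw [insert_erase hi₀]
      exact hind
    · rw [hx, ← hsum, ← add_sum_erase s (fun i => w i • a i) hi₀]
  · exact Or.inr hzero
end

section
/- Let c > 0 and κ, ρ ∈ (0,1) with κ = ρ. Then lim_{a→∞} (1/a) ∫_a^∞ (t^ρ − a^ρ) exp(−c(t^κ − a^κ)) dt = 0. -/
/-!
Substituting `t = a x` turns the normalized integral into `∫_{x > 1} g (a^ρ (x^ρ - 1)) dx` with
`g y = y e^{-c y}`. As `a → ∞` the integrand tends to `0` pointwise, and for `a ≥ 1` it is dominated
by the integrable function `(2/c) e^{c/2} e^{-(c/2) x^ρ}`, so the integral tends to `0`.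
-/

open MeasureTheory Real Filter Set Topology

lemma mul_exp_neg_mul_le (y : ℝ) {c : ℝ} (hc : 0 < c) :
    y * exp (-c * y) ≤ 2 / c * exp (-(c / 2) * y) := by
  have hy : y ≤ 2 / c * exp (c / 2 * y) := by
    rw [div_mul_eq_mul_div, le_div_iff₀ hc]
    linarith [add_one_le_exp (c / 2 * y)]
  calc y * exp (-c * y) ≤ 2 / c * exp (c / 2 * y) * exp (-c * y) := by gcongr
    _ = 2 / c * exp (-(c / 2) * y) := by rw [mul_assoc, ← exp_add]; ring_nf

lemma integrableOn_exp_neg_mul_rpow_Ioi {a b p : ℝ} (ha : 0 ≤ a) (hb : 0 < b) (hp : 0 < p) :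
    IntegrableOn (fun x : ℝ => exp (-b * x ^ p)) (Ioi a) := by
  have h := integrableOn_rpow_mul_exp_neg_mul_rpow (s := 0) neg_one_lt_zero hp hb
  simp only [rpow_zero, one_mul] at h
  exact h.mono_set (Ioi_subset_Ioi ha)

lemma norm_mul_rpow_sub_one_mul_exp_le {c ρ s x : ℝ} (hc : 0 < c) (hρ : 0 < ρ) (hs : 1 ≤ s)
    (hx : 1 ≤ x) :
    ‖s * (x ^ ρ - 1) * exp (-c * (s * (x ^ ρ - 1)))‖ ≤
      2 / c * exp (c / 2) * exp (-(c / 2) * x ^ ρ) := by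
  have hxρ : 0 ≤ x ^ ρ - 1 := sub_nonneg.mpr (one_le_rpow hx hρ.le)
  have hy : x ^ ρ - 1 ≤ s * (x ^ ρ - 1) := le_mul_of_one_le_left hxρ hs
  rw [norm_of_nonneg (by positivity)]
  calc s * (x ^ ρ - 1) * exp (-c * (s * (x ^ ρ - 1)))
      ≤ 2 / c * exp (-(c / 2) * (s * (x ^ ρ - 1))) := mul_exp_neg_mul_le _ hc
    _ ≤ 2 / c * exp (-(c / 2) * (x ^ ρ - 1)) := by gcongr 2 / c * exp ?_; nlinarith
    _ = 2 / c * exp (c / 2) * exp (-(c / 2) * x ^ ρ) := by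
      rw [mul_assoc, ← exp_add]; ring_nf

lemma tendsto_integral_mul_rpow_sub_one_mul_exp {c ρ : ℝ} (hc : 0 < c) (hρ : 0 < ρ) :
    Tendsto (fun s : ℝ => ∫ x in Ioi 1, s * (x ^ ρ - 1) * exp (-c * (s * (x ^ ρ - 1))))
      atTop (𝓝 0) := by
  have hpointwise : ∀ x ∈ Ioi (1 : ℝ),
      Tendsto (fun s : ℝ => s * (x ^ ρ - 1) * exp (-c * (s * (x ^ ρ - 1)))) atTop (𝓝 0) := by
    intro x hx
    have hxρ : 0 < x ^ ρ - 1 := sub_pos.mpr (one_lt_rpow hx hρ)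
    have hg : Tendsto (fun y : ℝ => y * exp (-c * y)) atTop (𝓝 0) := by
      simpa only [rpow_one] using tendsto_rpow_mul_exp_neg_mul_atTop_nhds_zero 1 c hc
    exact hg.comp (tendsto_id.atTop_mul_const hxρ)
  have hmeas : ∀ s : ℝ, AEStronglyMeasurable
      (fun x : ℝ => s * (x ^ ρ - 1) * exp (-c * (s * (x ^ ρ - 1)))) (volume.restrict (Ioi 1)) :=
    fun s => Continuous.aestronglyMeasurable (by fun_prop (disch := exact hρ.le))
  have hbound : ∀ᶠ s in atTop, ∀ᵐ x ∂volume.restrict (Ioi 1),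
      ‖s * (x ^ ρ - 1) * exp (-c * (s * (x ^ ρ - 1)))‖ ≤
        2 / c * exp (c / 2) * exp (-(c / 2) * x ^ ρ) := by
    filter_upwards [eventually_ge_atTop 1] with s hs
    filter_upwards [ae_restrict_mem measurableSet_Ioi] with x hx
    exact norm_mul_rpow_sub_one_mul_exp_le hc hρ hs (le_of_lt hx)
  have hint := (integrableOn_exp_neg_mul_rpow_Ioi zero_le_one (half_pos hc) hρ).const_mul
    (2 / c * exp (c / 2))
  simpa using tendsto_integral_filter_of_dominated_convergence _
    (Eventually.of_forall hmeas) hbound hint ((ae_restrict_mem measurableSet_Ioi).mono hpointwise)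

theorem stmt_8_general (c κ ρ : ℝ) (hc : 0 < c)
    (hρ : ρ ∈ Set.Ioo (0:ℝ) 1) (hκρ : κ = ρ) :
    Filter.Tendsto
      (fun a : ℝ =>
        a⁻¹ * ∫ t in Set.Ioi a, (t ^ ρ - a ^ ρ) * Real.exp (-c * (t ^ κ - a ^ κ)))
      Filter.atTop (nhds 0) := by
  subst κ
  refine ((tendsto_integral_mul_rpow_sub_one_mul_exp hc hρ.1).comp
    (tendsto_rpow_atTop hρ.1)).congr' ?_
  filter_upwards [eventually_gt_atTop 0] with a ha
  have hscale := integral_comp_mul_left_Ioi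
    (fun t => (t ^ ρ - a ^ ρ) * exp (-c * (t ^ ρ - a ^ ρ))) 1 ha
  rw [mul_one, smul_eq_mul] at hscale
  rw [Function.comp_apply, ← hscale]
  refine setIntegral_congr_fun measurableSet_Ioi fun x hx => ?_
  rw [mul_rpow ha.le (zero_lt_one.trans hx).le]
  ring_nf

/-- For `c > 0` and `κ = ρ ∈ (0,1)`,
`(1/a) ∫_a^∞ (t^ρ − a^ρ) exp(−c(t^κ − a^κ)) dt → 0` as `a → ∞`. -/
theorem stmt_8 (c κ ρ : ℝ) (hc : 0 < c) (hκ : κ ∈ Set.Ioo (0:ℝ) 1)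
    (hρ : ρ ∈ Set.Ioo (0:ℝ) 1) (hκρ : κ = ρ) :
    Filter.Tendsto
      (fun a : ℝ =>
        a⁻¹ * ∫ t in Set.Ioi a, (t ^ ρ - a ^ ρ) * Real.exp (-c * (t ^ κ - a ^ κ)))
      Filter.atTop (nhds 0) :=
  stmt_8_general c κ ρ hc hρ hκρ
end

section
/- Let c > 0, κ, ρ ∈ (0,1), and b ≥ a > 0. Then ∫_a^b (t^ρ − a^ρ) exp(−c(t^κ − a^κ)) dt ≤ C(c,κ,ρ) [Γ((1+ρ)/κ) + a^{1+ρ−κ}] for some constant C(c,κ,ρ) < ∞ depending only on c, κ, ρ. -/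
open Real Set MeasureTheory

/-!
Both factors of the integrand are controlled by the distance `t - a`: subadditivity of `x ↦ x ^ ρ`
gives `t ^ ρ - a ^ ρ ≤ (t - a) ^ ρ`. For `t ≤ 2a` concavity of `x ↦ x ^ κ` gives
`t ^ κ - a ^ κ ≥ (2 ^ κ - 1) a ^ (κ - 1) (t - a)`, a linear decay at rate `γ ∝ a ^ (κ - 1)`, and
`∫₀^∞ s ^ ρ e ^ (-γ s) ds = γ ^ (-(1 + ρ)) Γ(1 + ρ)` is a multiple of `a ^ ((1 - κ)(1 + ρ))`.
For `t ≥ 2a` we have `a ^ κ ≤ 2 ^ (-κ) t ^ κ`, so the exponent is at least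
`c (1 - 2 ^ (-κ)) (t - a) ^ κ`, and the substitution `u = s ^ κ` produces `Γ((1 + ρ) / κ)`.
Adding the two majorants handles both regimes at once. Finally
`a ^ ((1 - κ)(1 + ρ)) ≤ 1 + a ^ (1 + ρ - κ)` since `0 ≤ (1 - κ)(1 + ρ) ≤ 1 + ρ - κ`.
-/

lemma rpow_sub_rpow_le_sub_rpow {ρ a t : ℝ} (hρ0 : 0 ≤ ρ) (hρ1 : ρ ≤ 1) (ha : 0 ≤ a)
    (hat : a ≤ t) : t ^ ρ - a ^ ρ ≤ (t - a) ^ ρ := by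
  have h := rpow_add_le_add_rpow (sub_nonneg.2 hat) ha hρ0 hρ1
  rw [sub_add_cancel] at h
  linarith

lemma two_rpow_sub_one_mul_le_rpow_sub_rpow {κ a t : ℝ} (hκ0 : 0 ≤ κ) (hκ1 : κ ≤ 1) (ha : 0 < a)
    (hat : a ≤ t) (ht : t ≤ 2 * a) :
    (2 ^ κ - 1) * a ^ (κ - 1) * (t - a) ≤ t ^ κ - a ^ κ := by
  rcases hat.eq_or_lt with rfl | hat
  · simp
  have hslope := (concaveOn_rpow hκ0 hκ1).antitoneOn_slope_gt (mem_Ici.2 ha.le)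
    ⟨mem_Ici.2 (hat.le.trans' ha.le), hat⟩ ⟨mem_Ici.2 (by linarith), by linarith⟩ ht
  rw [slope_def_field, slope_def_field, le_div_iff₀ (sub_pos.2 hat)] at hslope
  refine le_of_eq_of_le ?_ hslope
  rw [mul_rpow zero_le_two ha.le, rpow_sub_one ha.ne']
  field_simp
  ring

lemma one_sub_two_rpow_neg_mul_le_rpow_sub_rpow {κ a t : ℝ} (hκ : 0 ≤ κ) (ha : 0 ≤ a)
    (ht : 2 * a ≤ t) : (1 - 2 ^ (-κ)) * (t - a) ^ κ ≤ t ^ κ - a ^ κ := by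
  have h2 : (2 : ℝ) ^ (-κ) ≤ 1 := rpow_le_one_of_one_le_of_nonpos one_le_two (neg_nonpos.2 hκ)
  have hat : a ^ κ ≤ 2 ^ (-κ) * t ^ κ := by
    calc a ^ κ ≤ (t / 2) ^ κ := rpow_le_rpow ha (by linarith) hκ
      _ = 2 ^ (-κ) * t ^ κ := by
        rw [div_rpow (by linarith) zero_le_two, rpow_neg zero_le_two, inv_mul_eq_div]
  have hta : (t - a) ^ κ ≤ t ^ κ := rpow_le_rpow (by linarith) (by linarith) hκ
  nlinarith [mul_le_mul_of_nonneg_left hta (sub_nonneg.2 h2)]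

lemma two_rpow_sub_one_pos {κ : ℝ} (hκ : 0 < κ) : 0 < (2 : ℝ) ^ κ - 1 :=
  sub_pos.2 (one_lt_rpow one_lt_two hκ)

lemma one_sub_two_rpow_neg_pos {κ : ℝ} (hκ : 0 < κ) : 0 < 1 - (2 : ℝ) ^ (-κ) :=
  sub_pos.2 (rpow_lt_one_of_one_lt_of_neg one_lt_two (neg_neg_of_pos hκ))

lemma rpow_sub_rpow_mul_exp_le {c κ ρ a t : ℝ} (hc : 0 ≤ c) (hκ0 : 0 ≤ κ) (hκ1 : κ ≤ 1)
    (hρ0 : 0 ≤ ρ) (hρ1 : ρ ≤ 1) (ha : 0 < a) (hat : a ≤ t) :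
    (t ^ ρ - a ^ ρ) * exp (-c * (t ^ κ - a ^ κ)) ≤
      (t - a) ^ ρ * exp (-(c * (2 ^ κ - 1) * a ^ (κ - 1)) * (t - a)) +
        (t - a) ^ ρ * exp (-(c * (1 - 2 ^ (-κ))) * (t - a) ^ κ) := by
  have hexp : exp (-c * (t ^ κ - a ^ κ)) ≤
      exp (-(c * (2 ^ κ - 1) * a ^ (κ - 1)) * (t - a)) +
        exp (-(c * (1 - 2 ^ (-κ))) * (t - a) ^ κ) := by
    rcases le_total t (2 * a) with ht | ht
    · have h := mul_le_mul_of_nonneg_left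
        (two_rpow_sub_one_mul_le_rpow_sub_rpow hκ0 hκ1 ha hat ht) hc
      have : exp (-c * (t ^ κ - a ^ κ)) ≤ exp (-(c * (2 ^ κ - 1) * a ^ (κ - 1)) * (t - a)) :=
        exp_le_exp.2 (by linarith)
      linarith [exp_nonneg (-(c * (1 - 2 ^ (-κ))) * (t - a) ^ κ)]
    · have h := mul_le_mul_of_nonneg_left
        (one_sub_two_rpow_neg_mul_le_rpow_sub_rpow hκ0 ha.le ht) hc
      have : exp (-c * (t ^ κ - a ^ κ)) ≤ exp (-(c * (1 - 2 ^ (-κ))) * (t - a) ^ κ) :=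
        exp_le_exp.2 (by linarith)
      linarith [exp_nonneg (-(c * (2 ^ κ - 1) * a ^ (κ - 1)) * (t - a))]
  rw [← mul_add]
  exact mul_le_mul (rpow_sub_rpow_le_sub_rpow hρ0 hρ1 ha.le hat) hexp (exp_nonneg _)
    (rpow_nonneg (sub_nonneg.2 hat) _)

lemma intervalIntegral_rpow_mul_exp_neg_mul_rpow_le {p q b x : ℝ} (hp : 0 < p) (hq : -1 < q)
    (hb : 0 < b) (hx : 0 ≤ x) :
    ∫ s in 0..x, s ^ q * exp (-b * s ^ p) ≤ b ^ (-(q + 1) / p) * (1 / p) * Gamma ((q + 1) / p) := by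
  rw [← integral_rpow_mul_exp_neg_mul_rpow hp hq hb, intervalIntegral.integral_of_le hx]
  refine setIntegral_mono_set (integrableOn_rpow_mul_exp_neg_mul_rpow hq hp hb) ?_
    Ioc_subset_Ioi_self.eventuallyLE
  filter_upwards [ae_restrict_mem measurableSet_Ioi] with s hs
  exact mul_nonneg (rpow_nonneg (le_of_lt hs) _) (exp_nonneg _)

theorem integral_rpow_sub_rpow_mul_exp_le {c κ ρ a b : ℝ} (hc : 0 < c) (hκ0 : 0 < κ)
    (hκ1 : κ ≤ 1) (hρ0 : 0 ≤ ρ) (hρ1 : ρ ≤ 1) (ha : 0 < a) (hab : a ≤ b) :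
    ∫ t in a..b, (t ^ ρ - a ^ ρ) * exp (-c * (t ^ κ - a ^ κ)) ≤
      (c * (2 ^ κ - 1)) ^ (-(ρ + 1)) * Gamma (ρ + 1) * a ^ ((1 - κ) * (ρ + 1)) +
        (c * (1 - 2 ^ (-κ))) ^ (-(ρ + 1) / κ) * (1 / κ) * Gamma ((ρ + 1) / κ) := by
  have h2κ := two_rpow_sub_one_pos hκ0
  have h2κ' := one_sub_two_rpow_neg_pos hκ0
  have hγ : 0 < c * (2 ^ κ - 1) * a ^ (κ - 1) := by positivity
  have hδ : 0 < c * (1 - 2 ^ (-κ)) := by positivity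
  set γ := c * (2 ^ κ - 1) * a ^ (κ - 1) with hγ_def
  set δ := c * (1 - 2 ^ (-κ))
  have hnear := intervalIntegral_rpow_mul_exp_neg_mul_rpow_le one_pos (by linarith : -1 < ρ) hγ
    (sub_nonneg.2 hab)
  simp only [rpow_one, div_one, mul_one] at hnear
  have hfar := intervalIntegral_rpow_mul_exp_neg_mul_rpow_le hκ0 (by linarith : -1 < ρ) hδ
    (sub_nonneg.2 hab)
  have hγ_pow : γ ^ (-(ρ + 1)) = (c * (2 ^ κ - 1)) ^ (-(ρ + 1)) * a ^ ((1 - κ) * (ρ + 1)) := by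
    rw [hγ_def, mul_rpow (by positivity) (rpow_nonneg ha.le _), ← rpow_mul ha.le]
    ring_nf
  rw [hγ_pow, mul_right_comm] at hnear
  calc ∫ t in a..b, (t ^ ρ - a ^ ρ) * exp (-c * (t ^ κ - a ^ κ))
      ≤ ∫ t in a..b, ((t - a) ^ ρ * exp (-γ * (t - a)) +
          (t - a) ^ ρ * exp (-δ * (t - a) ^ κ)) := by
        refine intervalIntegral.integral_mono_on hab ?_ ?_ fun t ht ↦
            rpow_sub_rpow_mul_exp_le hc.le hκ0.le hκ1 hρ0 hρ1 ha ht.1 <;>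
          apply Continuous.intervalIntegrable <;> fun_prop (disch := positivity)
    _ = ∫ s in 0..b - a, (s ^ ρ * exp (-γ * s) + s ^ ρ * exp (-δ * s ^ κ)) := by
        rw [intervalIntegral.integral_comp_sub_right
          (fun s ↦ s ^ ρ * exp (-γ * s) + s ^ ρ * exp (-δ * s ^ κ)), sub_self]
    _ = (∫ s in 0..b - a, s ^ ρ * exp (-γ * s)) + ∫ s in 0..b - a, s ^ ρ * exp (-δ * s ^ κ) :=
        intervalIntegral.integral_add
          (by apply Continuous.intervalIntegrable; fun_prop (disch := positivity))
          (by apply Continuous.intervalIntegrable; fun_prop (disch := positivity))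
    _ ≤ _ := add_le_add hnear hfar

lemma rpow_le_one_add_rpow {a r s : ℝ} (ha : 0 ≤ a) (hr : 0 ≤ r) (hrs : r ≤ s) :
    a ^ r ≤ 1 + a ^ s := by
  rcases le_total a 1 with h | h
  · linarith [rpow_le_one ha h hr, rpow_nonneg ha s]
  · linarith [rpow_le_rpow_of_exponent_le h hrs]

/-- For `c > 0`, `κ, ρ ∈ (0,1)` and `b ≥ a > 0`,
`∫_a^b (t^ρ − a^ρ) exp(−c(t^κ − a^κ)) dt ≤ C(c,κ,ρ) [Γ((1+ρ)/κ) + a^{1+ρ−κ}]`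
for a constant `C` depending only on `c, κ, ρ`. -/
theorem stmt_9 (c κ ρ : ℝ) (hc : 0 < c) (hκ : κ ∈ Set.Ioo (0:ℝ) 1)
    (hρ : ρ ∈ Set.Ioo (0:ℝ) 1) :
    ∃ C : ℝ, 0 < C ∧ ∀ a b : ℝ, 0 < a → a ≤ b →
      (∫ t in a..b, (t ^ ρ - a ^ ρ) * Real.exp (-c * (t ^ κ - a ^ κ)))
        ≤ C * (Real.Gamma ((1 + ρ) / κ) + a ^ (1 + ρ - κ)) := by
  obtain ⟨hκ0, hκ1⟩ := hκ
  obtain ⟨hρ0, hρ1⟩ := hρ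
  set K := (c * (2 ^ κ - 1)) ^ (-(ρ + 1)) * Gamma (ρ + 1)
  set B := (c * (1 - 2 ^ (-κ))) ^ (-(ρ + 1) / κ) * (1 / κ) * Gamma ((ρ + 1) / κ)
  have h2κ := two_rpow_sub_one_pos hκ0
  have h2κ' := one_sub_two_rpow_neg_pos hκ0
  have hK : 0 < K := by positivity
  have hB : 0 < B := by positivity
  have hΓ : 0 < Gamma ((ρ + 1) / κ) := by positivity
  refine ⟨(K + B) / Gamma ((ρ + 1) / κ) + K, by positivity, fun a b ha hab ↦ ?_⟩
  have hpow := rpow_le_one_add_rpow ha.le (mul_nonneg (sub_nonneg.2 hκ1.le) (by linarith))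
    (show (1 - κ) * (ρ + 1) ≤ 1 + ρ - κ by nlinarith)
  have hcancel := div_mul_cancel₀ (K + B) hΓ.ne'
  rw [show (1 + ρ) / κ = (ρ + 1) / κ by ring]
  calc _ ≤ K * a ^ ((1 - κ) * (ρ + 1)) + B :=
        integral_rpow_sub_rpow_mul_exp_le hc hκ0 hκ1.le hρ0.le hρ1.le ha hab
    _ ≤ K * (1 + a ^ (1 + ρ - κ)) + B := by gcongr
    _ ≤ _ := by nlinarith [rpow_pos_of_pos ha (1 + ρ - κ), div_pos (add_pos hK hB) hΓ]
end

section
/- Let β ∈ (1/2, 1) and c > 0. For any ρ > 1 there exists C < ∞ such that for all t ∈ ℕ, Σ_{k=1}^t k^{−ρβ} exp(−c(t^{1−β} − k^{1−β})) ≤ C (log t) / t^{(ρ−1)β}. -/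
/-!
Concavity of `x ↦ x ^ (1 - β)` gives `t^(1-β) - k^(1-β) ≥ (1 - β) t^(-β) (t - k)`, so the
exponential factor is at most `r ^ (t - k)` with `r = exp (-c (1 - β) t^(-β))`. For `k ≤ t / 2`
this is at most `exp (-c (1 - β) t^(1-β) / 2)`, which beats every power of `t`. For `k > t / 2`
the weight is at most `2^(ρβ) t^(-ρβ)` and the geometric sum is at most
`1 / (1 - r) ≤ e^(c(1-β)) t^β / (c (1 - β))`, giving `O(t^(-(ρ-1)β))`; the factor `log t` is
then free.
-/

open Real Finset

lemma mul_rpow_neg_mul_sub_le_rpow_one_sub_sub {β x y : ℝ} (hβ₀ : 0 ≤ β) (hβ₁ : β ≤ 1)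
    (hx : 0 ≤ x) (hy : 0 < y) :
    (1 - β) * y ^ (-β) * (y - x) ≤ y ^ (1 - β) - x ^ (1 - β) := by
  have hbern := rpow_one_add_le_one_add_mul_self (s := x / y - 1)
    (by linarith [div_nonneg hx hy.le]) (p := 1 - β) (by linarith) (by linarith)
  rw [add_sub_cancel, div_rpow hx hy.le, div_le_iff₀ (by positivity)] at hbern
  have hy_rpow : y ^ (-β) = y ^ (1 - β) / y := by rw [← rpow_sub_one hy.ne']; ring_nf
  have hscaled : y * x ^ (1 - β) ≤ (y + (1 - β) * (x - y)) * y ^ (1 - β) := by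
    calc y * x ^ (1 - β) ≤ y * ((1 + (1 - β) * (x / y - 1)) * y ^ (1 - β)) := by gcongr
      _ = (y + (1 - β) * (x - y)) * y ^ (1 - β) := by field_simp
  rw [hy_rpow, mul_div_assoc', div_mul_eq_mul_div, div_le_iff₀ hy]
  linarith

lemma exp_neg_mul_rpow_one_sub_sub_le {β c x y : ℝ} (hβ₀ : 0 ≤ β) (hβ₁ : β ≤ 1) (hc : 0 ≤ c)
    (hx : 0 ≤ x) (hy : 0 < y) :
    exp (-c * (y ^ (1 - β) - x ^ (1 - β))) ≤ exp (-(c * (1 - β) * y ^ (-β) * (y - x))) := by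
  have := mul_rpow_neg_mul_sub_le_rpow_one_sub_sub hβ₀ hβ₁ hx hy
  gcongr
  nlinarith

lemma sum_pow_sub_le_one_div_one_sub {r : ℝ} (hr₀ : 0 ≤ r) (hr₁ : r < 1) {s : Finset ℕ} {t : ℕ}
    (hs : ∀ k ∈ s, k ≤ t) : ∑ k ∈ s, r ^ (t - k) ≤ 1 / (1 - r) := by
  calc ∑ k ∈ s, r ^ (t - k) ≤ ∑ k ∈ range (t + 1), r ^ (t - k) :=
        sum_le_sum_of_subset_of_nonneg (fun k hk => mem_range_succ_iff.2 (hs k hk))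
          (fun _ _ _ => by positivity)
    _ = ∑ j ∈ range (t + 1), r ^ j := sum_range_reflect (fun j => r ^ j) (t + 1)
    _ ≤ r ^ 0 / (1 - r) := by rw [range_eq_Ico]; exact geom_sum_Ico_le_of_lt_one hr₀ hr₁
    _ = 1 / (1 - r) := by rw [pow_zero]

lemma one_div_one_sub_exp_neg_le {L : ℝ} (hL : 0 < L) : 1 / (1 - exp (-L)) ≤ exp L / L := by
  have hsub : L * exp (-L) ≤ 1 - exp (-L) := by
    have := add_one_le_exp L
    have h1 : exp L * exp (-L) = 1 := by rw [← exp_add, add_neg_cancel, exp_zero]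
    nlinarith [exp_pos (-L)]
  calc 1 / (1 - exp (-L)) ≤ 1 / (L * exp (-L)) := one_div_le_one_div_of_le (by positivity) hsub
    _ = exp L / L := by rw [exp_neg]; field_simp

lemma exists_rpow_le_mul_exp (p : ℝ) {κ : ℝ} (hκ : 0 < κ) :
    ∃ C > 0, ∀ x : ℝ, 1 ≤ x → x ^ p ≤ C * exp (κ * x) := by
  set n := ⌈p⌉₊
  refine ⟨n.factorial / κ ^ n, by positivity, fun x hx => ?_⟩
  have hexp := pow_div_factorial_le_exp _ (mul_nonneg hκ.le (zero_le_one.trans hx)) n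
  calc x ^ p ≤ x ^ (n : ℝ) := rpow_le_rpow_of_exponent_le hx (Nat.le_ceil p)
    _ = n.factorial / κ ^ n * ((κ * x) ^ n / n.factorial) := by
        rw [rpow_natCast, mul_pow]; field_simp
    _ ≤ n.factorial / κ ^ n * exp (κ * x) := by gcongr

noncomputable def decaySummand (β c ρ : ℝ) (t k : ℕ) : ℝ :=
  (k : ℝ) ^ (-(ρ * β)) * exp (-c * ((t : ℝ) ^ (1 - β) - (k : ℝ) ^ (1 - β)))

section decaySummand

variable {β c ρ : ℝ}

lemma decaySummand_le_of_two_mul_le (hβ₀ : 0 ≤ β) (hβ₁ : β ≤ 1) (hc : 0 ≤ c) (hρβ : 0 ≤ ρ * β)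
    {t k : ℕ} (hk : 0 < k) (hkt : 2 * k ≤ t) :
    decaySummand β c ρ t k ≤ exp (-(c * (1 - β) / 2 * (t : ℝ) ^ (1 - β))) := by
  have ht₀ : (0 : ℝ) < t := by exact_mod_cast (by omega : 0 < t)
  have hk₁ : (1 : ℝ) ≤ k := by exact_mod_cast hk
  have hhalf : (t : ℝ) ≤ 2 * (t - k) := by
    have : (2 * k : ℝ) ≤ t := by exact_mod_cast hkt
    linarith
  have hdecay : c * (1 - β) / 2 * (t : ℝ) ^ (1 - β) ≤ c * (1 - β) * (t : ℝ) ^ (-β) * (t - k) := by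
    have hτ : (t : ℝ) ^ (1 - β) = (t : ℝ) ^ (-β) * t := by
      rw [← rpow_add_one ht₀.ne']; ring_nf
    have : 0 ≤ c * (1 - β) * (t : ℝ) ^ (-β) := mul_nonneg (mul_nonneg hc (by linarith)) (by positivity)
    rw [hτ]
    nlinarith
  calc decaySummand β c ρ t k
      ≤ 1 * exp (-(c * (1 - β) * (t : ℝ) ^ (-β) * (t - k))) :=
        mul_le_mul (rpow_le_one_of_one_le_of_nonpos hk₁ (by linarith))
          (exp_neg_mul_rpow_one_sub_sub_le hβ₀ hβ₁ hc (by positivity) ht₀) (by positivity)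
          zero_le_one
    _ ≤ exp (-(c * (1 - β) / 2 * (t : ℝ) ^ (1 - β))) := by
        rw [one_mul]; exact exp_le_exp.2 (neg_le_neg hdecay)

lemma decaySummand_le_of_le_two_mul (hβ₀ : 0 ≤ β) (hβ₁ : β ≤ 1) (hc : 0 ≤ c) (hρβ : 0 ≤ ρ * β)
    {t k : ℕ} (hkt : t ≤ 2 * k) (hk : k ≤ t) (ht : 0 < t) :
    decaySummand β c ρ t k ≤
      2 ^ (ρ * β) * (t : ℝ) ^ (-(ρ * β)) * exp (-(c * (1 - β) * (t : ℝ) ^ (-β))) ^ (t - k) := by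
  have ht₀ : (0 : ℝ) < t := by exact_mod_cast ht
  have hhalf : (t : ℝ) / 2 ≤ k := by
    have : (t : ℝ) ≤ 2 * k := by exact_mod_cast hkt
    linarith
  have hweight : (k : ℝ) ^ (-(ρ * β)) ≤ 2 ^ (ρ * β) * (t : ℝ) ^ (-(ρ * β)) :=
    calc (k : ℝ) ^ (-(ρ * β)) ≤ ((t : ℝ) / 2) ^ (-(ρ * β)) :=
          rpow_le_rpow_of_nonpos (by positivity) hhalf (by linarith)
      _ = 2 ^ (ρ * β) * (t : ℝ) ^ (-(ρ * β)) := by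
          rw [div_rpow ht₀.le zero_le_two, rpow_neg zero_le_two, div_inv_eq_mul, mul_comm]
  have hexp : exp (-c * ((t : ℝ) ^ (1 - β) - (k : ℝ) ^ (1 - β))) ≤
      exp (-(c * (1 - β) * (t : ℝ) ^ (-β))) ^ (t - k) := by
    calc exp (-c * ((t : ℝ) ^ (1 - β) - (k : ℝ) ^ (1 - β)))
        ≤ exp (-(c * (1 - β) * (t : ℝ) ^ (-β) * (t - k))) :=
          exp_neg_mul_rpow_one_sub_sub_le hβ₀ hβ₁ hc (Nat.cast_nonneg k) ht₀
      _ = exp (-(c * (1 - β) * (t : ℝ) ^ (-β))) ^ (t - k) := by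
          rw [← exp_nat_mul, Nat.cast_sub hk]; ring_nf
  exact mul_le_mul hweight hexp (by positivity) (by positivity)

lemma exists_sum_Ioc_half_decaySummand_le (q : ℝ) (hβ₀ : 0 ≤ β) (hβ₁ : β < 1) (hc : 0 < c)
    (hρβ : 0 ≤ ρ * β) :
    ∃ C > 0, ∀ t : ℕ, 0 < t → ∑ k ∈ Ioc 0 (t / 2), decaySummand β c ρ t k ≤ C * (t : ℝ) ^ (-q) := by
  have h1β : 0 < 1 - β := by linarith
  set κ := c * (1 - β) / 2
  obtain ⟨C, hC, hpoly⟩ := exists_rpow_le_mul_exp ((1 + q) / (1 - β)) (by positivity : 0 < κ)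
  refine ⟨C, hC, fun t ht => ?_⟩
  have ht₀ : (0 : ℝ) < t := by exact_mod_cast ht
  have ht₁ : (1 : ℝ) ≤ t := by exact_mod_cast ht
  set E := exp (-(κ * (t : ℝ) ^ (1 - β)))
  have hterm : ∀ k ∈ Ioc 0 (t / 2), decaySummand β c ρ t k ≤ E := fun k hk =>
    decaySummand_le_of_two_mul_le hβ₀ hβ₁.le hc.le hρβ (mem_Ioc.1 hk).1
      (by have := (mem_Ioc.1 hk).2; omega)
  have hgrowth : (t : ℝ) ^ (1 + q) ≤ C * exp (κ * (t : ℝ) ^ (1 - β)) := by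
    have := hpoly _ (one_le_rpow ht₁ h1β.le)
    rwa [← rpow_mul ht₀.le, mul_div_cancel₀ _ h1β.ne'] at this
  calc ∑ k ∈ Ioc 0 (t / 2), decaySummand β c ρ t k ≤ #(Ioc 0 (t / 2)) • E :=
        sum_le_card_nsmul _ _ _ hterm
    _ ≤ t * E := by
        rw [Nat.card_Ioc, nsmul_eq_mul, Nat.sub_zero]
        gcongr
        exact_mod_cast Nat.div_le_self t 2
    _ = (t : ℝ) ^ (1 + q) * E * (t : ℝ) ^ (-q) := by
        rw [rpow_add ht₀, rpow_one, rpow_neg ht₀.le]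
        field_simp
    _ ≤ C * (t : ℝ) ^ (-q) := by
        gcongr
        calc (t : ℝ) ^ (1 + q) * E ≤ C * exp (κ * (t : ℝ) ^ (1 - β)) * E := by gcongr
          _ = C := by rw [mul_assoc, ← exp_add, add_neg_cancel, exp_zero, mul_one]

lemma sum_Ioc_half_decaySummand_le (hβ₀ : 0 ≤ β) (hβ₁ : β < 1) (hc : 0 < c) (hρβ : 0 ≤ ρ * β)
    {t : ℕ} (ht : 0 < t) :
    ∑ k ∈ Ioc (t / 2) t, decaySummand β c ρ t k ≤
      2 ^ (ρ * β) * exp (c * (1 - β)) / (c * (1 - β)) * (t : ℝ) ^ (-((ρ - 1) * β)) := by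
  have h1β : 0 < 1 - β := by linarith
  have ht₀ : (0 : ℝ) < t := by exact_mod_cast ht
  set L := c * (1 - β) * (t : ℝ) ^ (-β)
  have hL : 0 < L := by positivity
  have hLc : L ≤ c * (1 - β) :=
    mul_le_of_le_one_right (by positivity) (rpow_le_one_of_one_le_of_nonpos (by exact_mod_cast ht)
      (by linarith))
  set D := 2 ^ (ρ * β) * (t : ℝ) ^ (-(ρ * β))
  have hterm : ∀ k ∈ Ioc (t / 2) t, decaySummand β c ρ t k ≤ D * exp (-L) ^ (t - k) := by
    intro k hk
    obtain ⟨hk₁, hk₂⟩ := mem_Ioc.1 hk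
    exact decaySummand_le_of_le_two_mul hβ₀ hβ₁.le hc.le hρβ (by omega) hk₂ ht
  calc ∑ k ∈ Ioc (t / 2) t, decaySummand β c ρ t k ≤ ∑ k ∈ Ioc (t / 2) t, D * exp (-L) ^ (t - k) :=
        sum_le_sum hterm
    _ = D * ∑ k ∈ Ioc (t / 2) t, exp (-L) ^ (t - k) := by rw [mul_sum]
    _ ≤ D * (1 / (1 - exp (-L))) := by
        gcongr
        exact sum_pow_sub_le_one_div_one_sub (exp_pos _).le (exp_lt_one_iff.2 (by linarith))
          (fun k hk => (mem_Ioc.1 hk).2)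
    _ ≤ D * (exp (c * (1 - β)) / L) := by
        refine mul_le_mul_of_nonneg_left ((one_div_one_sub_exp_neg_le hL).trans ?_) (by positivity)
        exact div_le_div_of_nonneg_right (exp_le_exp.2 hLc) hL.le
    _ = 2 ^ (ρ * β) * exp (c * (1 - β)) / (c * (1 - β)) * (t : ℝ) ^ (-((ρ - 1) * β)) := by
        rw [show -((ρ - 1) * β) = -(ρ * β) - -β by ring, rpow_sub ht₀]
        simp only [D, L]
        field_simp

end decaySummand

lemma mul_rpow_neg_le_div_log_two_mul_log_div_rpow {C t : ℝ} (a : ℝ) (hC : 0 ≤ C) (ht : 2 ≤ t) :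
    C * t ^ (-a) ≤ C / log 2 * log t / t ^ a := by
  have hlog : log 2 ≤ log t := log_le_log two_pos ht
  have hlog2 : 0 < log 2 := log_pos one_lt_two
  calc C * t ^ (-a) = C / t ^ a := by rw [rpow_neg (by linarith), div_eq_mul_inv]
    _ ≤ C * (log t / log 2) / t ^ a :=
        div_le_div_of_nonneg_right (le_mul_of_one_le_right hC ((one_le_div hlog2).2 hlog))
          (rpow_nonneg (by linarith) a)
    _ = C / log 2 * log t / t ^ a := by ring

/-- For `β ∈ (1/2, 1)`, `c > 0`, `ρ > 1`, there exists `C < ∞` with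
`∑_{k=1}^t k^{−ρβ} exp(−c(t^{1−β} − k^{1−β})) ≤ C log t / t^{(ρ−1)β}` for all `t ≥ 2`. -/
theorem stmt_18 (β c ρ : ℝ) (hβ₁ : 1/2 < β) (hβ₂ : β < 1) (hc : 0 < c) (hρ : 1 < ρ) :
    ∃ C : ℝ, 0 < C ∧ ∀ t : ℕ, 2 ≤ t →
      ∑ k ∈ Finset.Icc 1 t,
          (k : ℝ) ^ (-(ρ * β)) * Real.exp (-c * ((t : ℝ) ^ (1 - β) - (k : ℝ) ^ (1 - β)))
        ≤ C * Real.log t / (t : ℝ) ^ ((ρ - 1) * β) := by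
  have hβ₀ : 0 ≤ β := by linarith
  have hρβ : 0 ≤ ρ * β := mul_nonneg (by linarith) hβ₀
  obtain ⟨A, hA, hhead⟩ := exists_sum_Ioc_half_decaySummand_le ((ρ - 1) * β) hβ₀ hβ₂ hc hρβ
  set B := 2 ^ (ρ * β) * exp (c * (1 - β)) / (c * (1 - β))
  have hB : 0 < B := div_pos (by positivity) (mul_pos hc (by linarith))
  refine ⟨(A + B) / log 2, div_pos (by positivity) (log_pos one_lt_two), fun t ht => ?_⟩
  have ht₀ : 0 < t := by omega
  calc ∑ k ∈ Icc 1 t, decaySummand β c ρ t k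
      = ∑ k ∈ Ioc 0 (t / 2), decaySummand β c ρ t k +
          ∑ k ∈ Ioc (t / 2) t, decaySummand β c ρ t k := by
        rw [sum_Ioc_consecutive _ (Nat.zero_le _) (Nat.div_le_self t 2), ← Icc_add_one_left_eq_Ioc,
          zero_add]
    _ ≤ (A + B) * (t : ℝ) ^ (-((ρ - 1) * β)) := by
        rw [add_mul]
        exact add_le_add (hhead t ht₀) (sum_Ioc_half_decaySummand_le hβ₀ hβ₂ hc hρβ ht₀)
    _ ≤ (A + B) / log 2 * log t / (t : ℝ) ^ ((ρ - 1) * β) :=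
        mul_rpow_neg_le_div_log_two_mul_log_div_rpow _ (by positivity) (by exact_mod_cast ht)
end
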